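/- arXiv:2105.01336 — 2 statements merged into one kernel-verified Lean document; each statement's English description precedes it below -/
import Mathlib

section
/- Let γ ≥ 1, μ > 0, v₊ > 1, ε > 0 with v₋^ε := 1 + ε^{1/γ} < v₊, and define p_ε, s_ε, Φ_ε as in the soft-congestion setting. If w₁, w₂ : ℝ → ℝ are two differentiable functions with values in the open interval (v₋^ε, v₊) both satisfying w'(x) = (w(x)/(μ s_ε)) Φ_ε(w(x)) for all x ∈ ℝ, then there exists c ∈ ℝ such that w₂(x) = w₁(x + c) for all x ∈ ℝ; i.e., the monotone heteroclinic profile of the soft-congestion traveling-wave ODE is unique up to a shift. -/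
/-!
The vector field `F v = v Φ(v) / (μ s)` is `C¹` near `[v₋, v₊]`, hence Lipschitz there, and it is
positive on `(v₋, v₊)` because `Φ(v) > 0` is exactly the statement that the chord of the strictly
convex pressure between `v₋` and `v₊` lies above its graph. A solution staying in `(v₋, v₊)` is
therefore strictly increasing; its limits at `±∞` must be zeros of `F`, i.e. `v₋` and `v₊`, so by
the intermediate value theorem `w₁` attains `w₂ 0` at some `c`, and uniqueness for the Lipschitz
autonomous ODE gives `w₂ = w₁ (· + c)`.
-/

open Set Filter Topology

section AutonomousODE

variable {F w : ℝ → ℝ} {a b : ℝ}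

theorem tendsto_atTop_of_hasDerivAt_of_pos (hF : ContinuousOn F (Ioo a b))
    (hpos : ∀ v ∈ Ioo a b, 0 < F v) (hw : ∀ x, w x ∈ Ioo a b)
    (hw' : ∀ x, HasDerivAt w (F (w x)) x) : Tendsto w atTop (𝓝 b) := by
  have hmono : StrictMono w := strictMono_of_deriv_pos fun x => (hw' x).deriv ▸ hpos _ (hw x)
  have hbdd : BddAbove (range w) := ⟨b, by rintro _ ⟨x, rfl⟩; exact (hw x).2.le⟩
  have hlim := tendsto_atTop_ciSup hmono.monotone hbdd
  set L := ⨆ x, w x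
  suffices L = b by rwa [← this]
  by_contra hne
  have hL : L ∈ Ioo a b :=
    ⟨(hw 0).1.trans_le (le_ciSup hbdd 0), (ciSup_le fun x => (hw x).2.le).lt_of_ne hne⟩
  -- `w' = F ∘ w` tends to `F L > 0`, so `w` eventually grows linearly, contradicting boundedness.
  have hderiv_lim : Tendsto (F ∘ w) atTop (𝓝 (F L)) :=
    (hF.continuousAt (Ioo_mem_nhds hL.1 hL.2)).tendsto.comp hlim
  obtain ⟨N, hN⟩ := eventually_atTop.1 <| hderiv_lim.eventually <|
    lt_mem_nhds (half_lt_self (hpos L hL))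
  set m := F L / 2
  have hm : 0 < m := half_pos (hpos L hL)
  have hT : N ≤ N + (b - a) / m :=
    le_add_of_nonneg_right (div_pos (sub_pos.2 (hL.1.trans hL.2)) hm).le
  have hgrowth := (convex_Ici N).mul_sub_le_image_sub_of_le_deriv
    (fun x _ => (hw' x).continuousAt.continuousWithinAt)
    (fun x _ => (hw' x).differentiableAt.differentiableWithinAt)
    (fun x hx => by rw [(hw' x).deriv]; exact (hN x (interior_subset hx)).le)
    N self_mem_Ici _ hT hT
  rw [add_sub_cancel_left, mul_div_cancel₀ _ hm.ne'] at hgrowth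
  linarith [(hw N).1, (hw (N + (b - a) / m)).2]

theorem tendsto_atBot_of_hasDerivAt_of_pos (hF : ContinuousOn F (Ioo a b))
    (hpos : ∀ v ∈ Ioo a b, 0 < F v) (hw : ∀ x, w x ∈ Ioo a b)
    (hw' : ∀ x, HasDerivAt w (F (w x)) x) : Tendsto w atBot (𝓝 a) := by
  -- `x ↦ -w (-x)` solves `u' = F (-u)` with values in `(-b, -a)`.
  have hneg : MapsTo Neg.neg (Ioo (-b) (-a)) (Ioo a b) := fun v hv =>
    ⟨lt_neg_of_lt_neg hv.2, neg_lt_of_neg_lt hv.1⟩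
  have hrefl : Tendsto (fun x => -w (-x)) atTop (𝓝 (-a)) := by
    refine tendsto_atTop_of_hasDerivAt_of_pos (F := fun v => F (-v)) (b := -a)
      (hF.comp continuousOn_neg hneg) (fun v hv => hpos _ (hneg hv))
      (fun x => ⟨neg_lt_neg (hw _).2, neg_lt_neg (hw _).1⟩) fun x => ?_
    simpa [Function.comp_def, Pi.neg_def] using ((hw' (-x)).comp x (hasDerivAt_neg x)).neg
  simpa using (hrefl.comp tendsto_neg_atBot_atTop).neg

theorem Ioo_subset_range_of_hasDerivAt_of_pos (hF : ContinuousOn F (Ioo a b))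
    (hpos : ∀ v ∈ Ioo a b, 0 < F v) (hw : ∀ x, w x ∈ Ioo a b)
    (hw' : ∀ x, HasDerivAt w (F (w x)) x) : Ioo a b ⊆ range w := fun _ hc =>
  mem_range_of_exists_le_of_exists_ge (continuous_iff_continuousAt.2 fun x => (hw' x).continuousAt)
    ((tendsto_atBot_of_hasDerivAt_of_pos hF hpos hw hw').eventually (ge_mem_nhds hc.1)).exists
    ((tendsto_atTop_of_hasDerivAt_of_pos hF hpos hw hw').eventually (le_mem_nhds hc.2)).exists

theorem exists_shift_eq_of_hasDerivAt {K : NNReal} (hF : LipschitzOnWith K F (Ioo a b))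
    (hpos : ∀ v ∈ Ioo a b, 0 < F v) {w₁ w₂ : ℝ → ℝ} (hw₁ : ∀ x, w₁ x ∈ Ioo a b)
    (hw₂ : ∀ x, w₂ x ∈ Ioo a b) (hw₁' : ∀ x, HasDerivAt w₁ (F (w₁ x)) x)
    (hw₂' : ∀ x, HasDerivAt w₂ (F (w₂ x)) x) : ∃ c, ∀ x, w₂ x = w₁ (x + c) := by
  obtain ⟨c, hc⟩ := Ioo_subset_range_of_hasDerivAt_of_pos hF.continuousOn hpos hw₁ hw₁' (hw₂ 0)
  refine ⟨c, congrFun (ODE_solution_unique_univ (v := fun _ => F) (s := fun _ => Ioo a b)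
    (t₀ := 0) (fun _ => hF) (fun x => ⟨hw₂' x, hw₂ x⟩) (fun x => ⟨?_, hw₁ (x + c)⟩) ?_)⟩
  · simpa [Function.comp_def] using (hw₁' (x + c)).comp x ((hasDerivAt_id x).add_const c)
  · simp [hc]

end AutonomousODE

theorem StrictConvexOn.lt_secant {s : Set ℝ} {f : ℝ → ℝ} (hf : StrictConvexOn ℝ s f) {a b x : ℝ}
    (ha : a ∈ s) (hb : b ∈ s) (hax : a < x) (hxb : x < b) :
    f x < (f a - f b) / (b - a) * (b - x) + f b := by
  have key := hf.secant_strict_mono_aux1 ha hb hax hxb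
  have hba : 0 < b - a := by linarith
  rw [div_mul_eq_mul_div, div_add' _ _ _ hba.ne', lt_div_iff₀ hba]
  linarith

noncomputable def singularPressure (ε γ v : ℝ) : ℝ := ε * (v - 1) ^ (-γ)

section SingularPressure

variable {ε γ : ℝ}

theorem hasDerivAt_singularPressure {v : ℝ} (hv : 1 < v) :
    HasDerivAt (singularPressure ε γ) (ε * (-γ * (v - 1) ^ (-γ - 1))) v := by
  have h := ((Real.hasDerivAt_rpow_const (p := -γ) (Or.inl (sub_pos.2 hv).ne')).comp v
    ((hasDerivAt_id v).sub_const 1)).const_mul ε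
  rwa [mul_one] at h

theorem contDiffOn_singularPressure {n : WithTop ℕ∞} :
    ContDiffOn ℝ n (singularPressure ε γ) (Ioi 1) := fun _ hv =>
  (contDiffAt_const.mul ((contDiffAt_id.sub contDiffAt_const).rpow_const_of_ne
    (sub_pos.2 hv).ne')).contDiffWithinAt

theorem strictAntiOn_singularPressure (hε : 0 < ε) (hγ : 0 < γ) :
    StrictAntiOn (singularPressure ε γ) (Ioi 1) := fun x hx y _ hxy =>
  mul_lt_mul_of_pos_left (Real.rpow_lt_rpow_of_neg (sub_pos.2 hx) (by linarith) (by linarith)) hε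

theorem strictConvexOn_singularPressure (hε : 0 < ε) (hγ : 0 < γ) :
    StrictConvexOn ℝ (Ioi 1) (singularPressure ε γ) := by
  refine StrictMonoOn.strictConvexOn_of_deriv (convex_Ioi 1)
    (contDiffOn_singularPressure (n := 0)).continuousOn ?_
  rw [interior_Ioi]
  intro x hx y _ hxy
  rw [(hasDerivAt_singularPressure hx).deriv,
    (hasDerivAt_singularPressure (hx.out.trans hxy)).deriv]
  have := Real.rpow_lt_rpow_of_neg (sub_pos.2 hx) (sub_lt_sub_right hxy 1)
    (by linarith : -γ - 1 < 0)
  nlinarith [mul_pos hε hγ]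

end SingularPressure

theorem stmt7_general (γ μ vp ε : ℝ) (hγ : 1 ≤ γ) (hμ : 0 < μ) (hε : 0 < ε)
    (pe : ℝ → ℝ) (hpe : ∀ v : ℝ, pe v = ε * (v - 1) ^ (-γ))
    (vm : ℝ) (hvm : vm = 1 + ε ^ (1 / γ)) (hlt : vm < vp)
    (se : ℝ) (hse : se = Real.sqrt ((pe vm - pe vp) / (vp - vm)))
    (Φ : ℝ → ℝ) (hΦ : ∀ v : ℝ, Φ v = se ^ 2 * (vp - v) + pe vp - pe v)
    (w₁ w₂ : ℝ → ℝ)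
    (hw₁range : ∀ x : ℝ, w₁ x ∈ Ioo vm vp)
    (hw₂range : ∀ x : ℝ, w₂ x ∈ Ioo vm vp)
    (hw₁ode : ∀ x : ℝ, HasDerivAt w₁ (w₁ x / (μ * se) * Φ (w₁ x)) x)
    (hw₂ode : ∀ x : ℝ, HasDerivAt w₂ (w₂ x / (μ * se) * Φ (w₂ x)) x) :
    ∃ c : ℝ, ∀ x : ℝ, w₂ x = w₁ (x + c) := by
  have hγ0 : 0 < γ := by linarith
  obtain rfl : pe = singularPressure ε γ := funext hpe
  have hvm1 : 1 < vm := by rw [hvm]; linarith [Real.rpow_pos_of_pos hε (1 / γ)]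
  have hvp1 : 1 < vp := hvm1.trans hlt
  have hslope : 0 < (singularPressure ε γ vm - singularPressure ε γ vp) / (vp - vm) :=
    div_pos (sub_pos.2 (strictAntiOn_singularPressure hε hγ0 hvm1 hvp1 hlt)) (sub_pos.2 hlt)
  have hse_pos : 0 < se := hse ▸ Real.sqrt_pos.2 hslope
  have hse_sq : se ^ 2 = _ := hse ▸ Real.sq_sqrt hslope.le
  have hΦ_pos : ∀ v ∈ Ioo vm vp, 0 < Φ v := fun v hv => by
    have := (strictConvexOn_singularPressure hε hγ0).lt_secant hvm1 hvp1 hv.1 hv.2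
    rw [hΦ, hse_sq]
    linarith
  have hF_pos : ∀ v ∈ Ioo vm vp, 0 < v / (μ * se) * Φ v := fun v hv =>
    mul_pos (div_pos (by linarith [hv.1]) (mul_pos hμ hse_pos)) (hΦ_pos v hv)
  obtain ⟨K, hK⟩ : ∃ K, LipschitzOnWith K (fun v => v / (μ * se) * Φ v) (Icc vm vp) := by
    refine ContDiffOn.exists_lipschitzOnWith (n := 1) ?_ one_ne_zero (convex_Icc _ _) isCompact_Icc
    rw [funext hΦ]
    exact (contDiffOn_id.div_const _).mul ((contDiffOn_const.mul (contDiffOn_const.sub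
      contDiffOn_id)).add contDiffOn_const |>.sub (contDiffOn_singularPressure.mono
      fun v hv => hvm1.trans_le hv.1))
  exact exists_shift_eq_of_hasDerivAt (hK.mono Ioo_subset_Icc_self) hF_pos hw₁range hw₂range
    hw₁ode hw₂ode

/-- Uniqueness up to a shift of the monotone heteroclinic profile of the soft-congestion
traveling-wave ODE `w' = (w/(μ s_ε)) Φ_ε(w)` with values in `(v₋^ε, v₊)`. -/
theorem stmt7 (γ μ vp ε : ℝ) (hγ : 1 ≤ γ) (hμ : 0 < μ) (hvp : 1 < vp) (hε : 0 < ε)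
    (pe : ℝ → ℝ) (hpe : ∀ v : ℝ, pe v = ε * (v - 1) ^ (-γ))
    (vm : ℝ) (hvm : vm = 1 + ε ^ (1 / γ)) (hlt : vm < vp)
    (se : ℝ) (hse : se = Real.sqrt ((pe vm - pe vp) / (vp - vm)))
    (Φ : ℝ → ℝ) (hΦ : ∀ v : ℝ, Φ v = se ^ 2 * (vp - v) + pe vp - pe v)
    (w₁ w₂ : ℝ → ℝ)
    (hw₁range : ∀ x : ℝ, w₁ x ∈ Ioo vm vp)
    (hw₂range : ∀ x : ℝ, w₂ x ∈ Ioo vm vp)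
    (hw₁ode : ∀ x : ℝ, HasDerivAt w₁ (w₁ x / (μ * se) * Φ (w₁ x)) x)
    (hw₂ode : ∀ x : ℝ, HasDerivAt w₂ (w₂ x / (μ * se) * Φ (w₂ x)) x) :
    ∃ c : ℝ, ∀ x : ℝ, w₂ x = w₁ (x + c) :=
  stmt7_general γ μ vp ε hγ hμ hε pe hpe vm hvm hlt se hse Φ hΦ w₁ w₂ hw₁range hw₂range hw₁ode
    hw₂ode
end

section
/- Let γ ≥ 1, μ > 0, v₊ > 2. For each sufficiently small ε > 0 let v̄_ε : ℝ → (v₋^ε, v₊) be the unique monotone heteroclinic solution of v̄_ε' = (v̄_ε/(μ s_ε)) Φ_ε(v̄_ε) normalized by v̄_ε(0) = 1 + ε^{1/(γ+1)}, where p_ε, v₋^ε, s_ε, Φ_ε are as in the soft-congestion setting. Let s := 1/sqrt(v₊ − 1) and let v̄ be the limit profile v̄(x) = 1 for x ≤ 0, v̄(x) = v₊/(1 + (v₊ − 1) exp(−s v₊ x/μ)) for x > 0. Then there exists a sequence ε_n → 0⁺ such that v̄_{ε_n} → v̄ uniformly on every compact subset of ℝ, i.e. for every R > 0, sup_{|x|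 ≤ R} |v̄_{ε_n}(x) − v̄(x)| → 0 as n → ∞. -/
open Set Filter Topology Real

/-!
Since `p_ε(v₋^ε) = 1` and `p_ε(v₊) → 0`, the speed `s_ε` tends to `s = 1/√(v₊ - 1)`.
Left of `0` the profile is trapped between `1` and `v̄_ε(0) = 1 + ε^{1/(γ+1)}` by monotonicity.
Right of `0` it stays above `1 + ε^{1/(γ+1)}`, where `p_ε ≤ ε^{1/(γ+1)}`; so its equation differs
from the logistic equation `v' = (s/μ) v (v₊ - v)` by `O(|s_ε - s| + ε^{1/(γ+1)})`, and Grönwall's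
inequality, started from `|v̄_ε(0) - 1| = ε^{1/(γ+1)}`, compares it with the logistic solution
through `1`, which is `v̄` on `[0, ∞)`. Hence `v̄_ε → v̄` locally uniformly as `ε → 0⁺`, and any
sequence `ε_n → 0⁺` will do.
-/

theorem gronwallBound_le_mul_exp {δ K ε x : ℝ} (hK : 0 ≤ K) (hε : 0 ≤ ε) :
    gronwallBound δ K ε x ≤ (δ + ε * x) * exp (K * x) := by
  rcases hK.eq_or_lt with rfl | hK
  · simp [gronwallBound_K0]
  rw [gronwallBound_of_K_ne_0 hK.ne']
  have hexp : exp (K * x) - 1 ≤ K * x * exp (K * x) := by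
    have h := one_sub_le_exp_neg (K * x)
    rw [exp_neg] at h
    have hpos := exp_pos (K * x)
    field_simp at h
    linarith
  have : ε / K * (exp (K * x) - 1) ≤ ε * x * exp (K * x) := by
    rw [div_mul_eq_mul_div, div_le_iff₀ hK]
    nlinarith
  linarith

theorem lipschitzOnWith_mul_mul_sub {b c : ℝ} (hc : 0 ≤ c) :
    LipschitzOnWith (c * b).toNNReal (fun v => c * v * (b - v)) (Icc 0 b) := by
  refine (convex_Icc 0 b).lipschitzOnWith_of_nnnorm_hasDerivWithin_le
    (f' := fun v => c * (b - 2 * v)) (fun v _ => ?_) fun v hv => ?_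
  · refine (((hasDerivAt_id' v).const_mul c).mul
      ((hasDerivAt_id' v).const_sub b)).hasDerivWithinAt.congr_deriv ?_
    ring
  · have hb : 0 ≤ b := hv.1.trans hv.2
    rw [← NNReal.coe_le_coe, coe_nnnorm, Real.coe_toNNReal _ (by positivity), norm_mul,
      Real.norm_of_nonneg hc, Real.norm_eq_abs]
    exact mul_le_mul_of_nonneg_left (abs_le.2 ⟨by linarith [hv.2], by linarith [hv.1]⟩) hc

noncomputable def logistic (b c x : ℝ) : ℝ := b / (1 + (b - 1) * exp (-c * b * x))

section Logistic

variable {b c : ℝ}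

theorem logistic_zero (hb : b ≠ 0) : logistic b c 0 = 1 := by
  simp [logistic, hb]

theorem one_le_logistic_denom (hb : 1 ≤ b) (x : ℝ) : 1 ≤ 1 + (b - 1) * exp (-c * b * x) :=
  le_add_of_nonneg_right (mul_nonneg (sub_nonneg.2 hb) (exp_pos _).le)

theorem logistic_mem_Icc (hb : 1 ≤ b) (x : ℝ) : logistic b c x ∈ Icc 0 b :=
  ⟨div_nonneg (by linarith) (by linarith [one_le_logistic_denom (c := c) hb x]),
    div_le_self (by linarith) (one_le_logistic_denom hb x)⟩

theorem hasDerivAt_logistic (hb : 1 ≤ b) (x : ℝ) :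
    HasDerivAt (logistic b c) (c * logistic b c x * (b - logistic b c x)) x := by
  have hD := (zero_lt_one.trans_le (one_le_logistic_denom (c := c) hb x)).ne'
  have h : HasDerivAt (logistic b c) _ x := (hasDerivAt_const x b).div
    ((((hasDerivAt_id' x).const_mul (-c * b)).exp.const_mul (b - 1)).const_add 1) hD
  convert h using 1
  rw [logistic]
  generalize exp (-c * b * x) = E at hD ⊢
  field_simp
  ring

end Logistic

theorem abs_sub_logistic_le_of_approx {b c a C : ℝ} (hb : 1 ≤ b) (hc : 0 ≤ c) {f f' : ℝ → ℝ}
    (hf : ∀ t, 0 ≤ t → HasDerivAt f (f' t) t) (hf_mem : ∀ t, 0 ≤ t → f t ∈ Icc 0 b)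
    (hf' : ∀ t, 0 ≤ t → |f' t - c * f t * (b - f t)| ≤ C) (hf0 : |f 0 - 1| ≤ a)
    {x : ℝ} (hx : 0 ≤ x) :
    |f x - logistic b c x| ≤ (a + C * x) * exp (c * b * x) := by
  have hC : 0 ≤ C := (abs_nonneg _).trans (hf' 0 le_rfl)
  have key := dist_le_of_approx_trajectories_ODE_of_mem (v := fun _ v => c * v * (b - v))
    (s := fun _ => Icc 0 b) (δ := a) (fun _ _ => lipschitzOnWith_mul_mul_sub hc)
    (fun t ht => (hf t ht.1).continuousAt.continuousWithinAt)
    (fun t ht => (hf t ht.1).hasDerivWithinAt) (fun t ht => hf' t ht.1) (fun t ht => hf_mem t ht.1)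
    (fun t _ => (hasDerivAt_logistic (c := c) hb t).continuousAt.continuousWithinAt)
    (fun t _ => (hasDerivAt_logistic hb t).hasDerivWithinAt) (fun t _ => (dist_self _).le)
    (fun t _ => logistic_mem_Icc hb t)
    (by rwa [logistic_zero (by linarith), Real.dist_eq]) x ⟨hx, le_rfl⟩
  rw [Real.coe_toNNReal _ (by positivity), add_zero, sub_zero, Real.dist_eq] at key
  exact key.trans (gronwallBound_le_mul_exp (by positivity) hC)

theorem tendsto_rpow_nhdsGT_zero {q : ℝ} (hq : 0 < q) :
    Tendsto (fun ε : ℝ => ε ^ q) (𝓝[>] 0) (𝓝 0) :=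
  ((continuous_rpow_const hq.le).tendsto' 0 0 (zero_rpow hq.ne')).mono_left nhdsWithin_le_nhds

namespace SoftCongestion

noncomputable def pressure (γ ε v : ℝ) : ℝ := ε * (v - 1) ^ (-γ)

noncomputable def leftState (γ ε : ℝ) : ℝ := 1 + ε ^ (1 / γ)

noncomputable def speed (γ vp ε : ℝ) : ℝ :=
  √((pressure γ ε (leftState γ ε) - pressure γ ε vp) / (vp - leftState γ ε))

noncomputable def waveField (γ μ vp ε v : ℝ) : ℝ :=
  v / (μ * speed γ vp ε) * (speed γ vp ε ^ 2 * (vp - v) + pressure γ ε vp - pressure γ ε v)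

noncomputable def freeCongestedProfile (vp c x : ℝ) : ℝ := if x ≤ 0 then 1 else logistic vp c x

variable {γ μ vp ε : ℝ}

theorem pressure_nonneg (hε : 0 ≤ ε) {v : ℝ} (hv : 1 ≤ v) : 0 ≤ pressure γ ε v :=
  mul_nonneg hε (rpow_nonneg (sub_nonneg.2 hv) _)

theorem pressure_le_pressure (hγ : 0 ≤ γ) (hε : 0 ≤ ε) {v w : ℝ} (hv : 1 < v) (hvw : v ≤ w) :
    pressure γ ε w ≤ pressure γ ε v :=
  mul_le_mul_of_nonneg_left
    (rpow_le_rpow_of_nonpos (sub_pos.2 hv) (by linarith) (by linarith)) hε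

theorem pressure_leftState (hγ : γ ≠ 0) (hε : 0 < ε) : pressure γ ε (leftState γ ε) = 1 := by
  rw [pressure, leftState, add_sub_cancel_left, ← rpow_mul hε.le, one_div_mul_eq_div,
    neg_div_self hγ, rpow_neg_one, mul_inv_cancel₀ hε.ne']

theorem pressure_one_add_rpow (hγ : γ + 1 ≠ 0) (hε : 0 < ε) :
    pressure γ ε (1 + ε ^ (1 / (γ + 1))) = ε ^ (1 / (γ + 1)) := by
  rw [pressure, add_sub_cancel_left, ← rpow_mul hε.le]
  nth_rewrite 1 [← rpow_one ε]
  rw [← rpow_add hε]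
  congr 1
  field_simp
  ring

theorem one_lt_leftState (hε : 0 < ε) : 1 < leftState γ ε :=
  lt_add_of_pos_right 1 (rpow_pos_of_pos hε _)

theorem tendsto_pressure (v : ℝ) : Tendsto (fun ε => pressure γ ε v) (𝓝[>] 0) (𝓝 0) := by
  simpa [pressure] using
    (tendsto_nhdsWithin_of_tendsto_nhds (a := (0 : ℝ)) (s := Ioi 0) tendsto_id).mul_const
      ((v - 1) ^ (-γ))

theorem tendsto_speed (hγ : 0 < γ) (hvp : 1 < vp) :
    Tendsto (speed γ vp) (𝓝[>] 0) (𝓝 (1 / √(vp - 1))) := by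
  have hleft : Tendsto (leftState γ) (𝓝[>] 0) (𝓝 1) := by
    have h := (tendsto_rpow_nhdsGT_zero (one_div_pos.2 hγ)).const_add 1
    rwa [add_zero] at h
  have hnum : (fun ε => 1 - pressure γ ε vp) =ᶠ[𝓝[>] 0]
      fun ε => pressure γ ε (leftState γ ε) - pressure γ ε vp :=
    eventually_mem_nhdsWithin.mono fun ε hε => by dsimp only; rw [pressure_leftState hγ.ne' hε]
  have h := ((((tendsto_pressure vp).const_sub 1).congr' hnum).div (hleft.const_sub vp)
    (sub_ne_zero.2 hvp.ne')).sqrt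
  rwa [sub_zero, one_div, sqrt_inv, ← one_div] at h

theorem abs_waveField_sub_le (hμ : 0 < μ) (hσ : 0 < speed γ vp ε) (hε : 0 ≤ ε) {v : ℝ}
    (hv : 1 ≤ v) (hvp : v ≤ vp) (s : ℝ) :
    |waveField γ μ vp ε v - s / μ * v * (vp - v)| ≤
      (vp ^ 2 * |speed γ vp ε - s| + vp * (pressure γ ε vp + pressure γ ε v) / speed γ vp ε) /
        μ := by
  have hP := pressure_nonneg (γ := γ) hε (hv.trans hvp)
  have hQ := pressure_nonneg (γ := γ) hε hv
  rw [waveField]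
  set σ := speed γ vp ε
  set P := pressure γ ε vp
  set Q := pressure γ ε v
  have hsplit : v / (μ * σ) * (σ ^ 2 * (vp - v) + P - Q) - s / μ * v * (vp - v) =
      (v * (vp - v) * (σ - s) + v * (P - Q) / σ) / μ := by
    field_simp
    ring
  rw [hsplit, abs_div, abs_of_pos hμ]
  gcongr
  refine (abs_add_le _ _).trans (add_le_add ?_ ?_)
  · rw [abs_mul, abs_of_nonneg (by nlinarith : 0 ≤ v * (vp - v))]
    gcongr
    nlinarith
  · rw [abs_div, abs_mul, abs_of_nonneg (by linarith : 0 ≤ v), abs_of_pos hσ]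
    gcongr
    · linarith
    · exact abs_le.2 ⟨by linarith, by linarith⟩

structure IsNormalizedProfile (γ μ vp ε : ℝ) (f : ℝ → ℝ) : Prop where
  mem_Ioo : ∀ x, f x ∈ Ioo (leftState γ ε) vp
  hasDerivAt : ∀ x, HasDerivAt f (waveField γ μ vp ε (f x)) x
  monotone : Monotone f
  map_zero : f 0 = 1 + ε ^ (1 / (γ + 1))

/-- Bounds the distance between `waveField` and the logistic field along a normalized profile on
`[0, ∞)`, as soon as `s / 2 < speed γ vp ε`. -/
noncomputable def defect (γ μ vp s ε : ℝ) : ℝ :=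
  (vp ^ 2 * |speed γ vp ε - s| + 2 * vp * (pressure γ ε vp + ε ^ (1 / (γ + 1))) / s) / μ

theorem tendsto_defect (hγ : 0 < γ) (hvp : 1 < vp) :
    Tendsto (defect γ μ vp (1 / √(vp - 1))) (𝓝[>] 0) (𝓝 0) := by
  set s := 1 / √(vp - 1)
  have hspeed := ((tendsto_speed hγ hvp).sub_const s).abs.const_mul (vp ^ 2)
  have hpressure := (((tendsto_pressure (γ := γ) vp).add
    (tendsto_rpow_nhdsGT_zero (q := 1 / (γ + 1)) (by positivity))).const_mul (2 * vp)).div_const s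
  have h : Tendsto (fun ε => defect γ μ vp s ε) (𝓝[>] 0)
      (𝓝 ((vp ^ 2 * |s - s| + 2 * vp * (0 + 0) / s) / μ)) := (hspeed.add hpressure).div_const μ
  simpa using h

namespace IsNormalizedProfile

variable {f : ℝ → ℝ}

theorem one_lt (hf : IsNormalizedProfile γ μ vp ε f) (hε : 0 < ε) (x : ℝ) : 1 < f x :=
  (one_lt_leftState hε).trans (hf.mem_Ioo x).1

theorem abs_sub_one_le (hf : IsNormalizedProfile γ μ vp ε f) (hε : 0 < ε) {x : ℝ} (hx : x ≤ 0) :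
    |f x - 1| ≤ ε ^ (1 / (γ + 1)) :=
  abs_le.2 ⟨by linarith [hf.one_lt hε x, rpow_pos_of_pos hε (1 / (γ + 1))],
    by linarith [hf.monotone hx, hf.map_zero]⟩

theorem pressure_le (hf : IsNormalizedProfile γ μ vp ε f) (hγ : 0 ≤ γ) (hε : 0 < ε) {t : ℝ}
    (ht : 0 ≤ t) : pressure γ ε (f t) ≤ ε ^ (1 / (γ + 1)) :=
  (pressure_le_pressure hγ hε.le (lt_add_of_pos_right 1 (rpow_pos_of_pos hε _))
    (hf.map_zero ▸ hf.monotone ht)).trans_eq (pressure_one_add_rpow (by linarith) hε)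

theorem abs_sub_logistic_le (hf : IsNormalizedProfile γ μ vp ε f) (hγ : 0 ≤ γ) (hμ : 0 < μ)
    (hε : 0 < ε) {s : ℝ} (hs : 0 < s) (hσ : s / 2 < speed γ vp ε) {x : ℝ} (hx : 0 ≤ x) :
    |f x - logistic vp (s / μ) x| ≤
      (ε ^ (1 / (γ + 1)) + defect γ μ vp s ε * x) * exp (s / μ * vp * x) := by
  have hvp : 1 < vp := (hf.one_lt hε 0).trans (hf.mem_Ioo 0).2
  refine abs_sub_logistic_le_of_approx hvp.le (by positivity) (fun t _ => hf.hasDerivAt t)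
    (fun t _ => ⟨by linarith [hf.one_lt hε t], (hf.mem_Ioo t).2.le⟩) (fun t ht => ?_)
    (hf.abs_sub_one_le hε le_rfl) hx
  have hσ0 : 0 < speed γ vp ε := by linarith
  refine (abs_waveField_sub_le hμ hσ0 hε.le (hf.one_lt hε t).le (hf.mem_Ioo t).2.le s).trans ?_
  have hP := pressure_nonneg (γ := γ) hε.le hvp.le
  have hQ := hf.pressure_le hγ hε ht
  rw [defect]
  gcongr (_ + ?_) / _
  calc vp * (pressure γ ε vp + pressure γ ε (f t)) / speed γ vp ε
      ≤ vp * (pressure γ ε vp + ε ^ (1 / (γ + 1))) / (s / 2) := by gcongr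
    _ = 2 * vp * (pressure γ ε vp + ε ^ (1 / (γ + 1))) / s := by field_simp

theorem abs_sub_freeCongestedProfile_le (hf : IsNormalizedProfile γ μ vp ε f) (hγ : 0 ≤ γ)
    (hμ : 0 < μ) (hε : 0 < ε) {s : ℝ} (hs : 0 < s) (hσ : s / 2 < speed γ vp ε) {x R : ℝ}
    (hx : |x| ≤ R) :
    |f x - freeCongestedProfile vp (s / μ) x| ≤
      (ε ^ (1 / (γ + 1)) + defect γ μ vp s ε * R) * exp (s / μ * vp * R) := by
  have hR : 0 ≤ R := (abs_nonneg x).trans hx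
  have hvp : 1 < vp := (hf.one_lt hε 0).trans (hf.mem_Ioo 0).2
  have ha := rpow_pos_of_pos hε (1 / (γ + 1))
  have hD : 0 ≤ defect γ μ vp s ε := by
    have := pressure_nonneg (γ := γ) hε.le hvp.le
    unfold defect
    positivity
  rw [freeCongestedProfile]
  split_ifs with hx0
  · calc |f x - 1| ≤ ε ^ (1 / (γ + 1)) := hf.abs_sub_one_le hε hx0
      _ ≤ ε ^ (1 / (γ + 1)) + defect γ μ vp s ε * R := le_add_of_nonneg_right (by positivity)
      _ ≤ _ := le_mul_of_one_le_right (by positivity) (one_le_exp (by positivity))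
  · refine (hf.abs_sub_logistic_le hγ hμ hε hs hσ (not_le.1 hx0).le).trans ?_
    have hxR : x ≤ R := (le_abs_self x).trans hx
    gcongr

end IsNormalizedProfile

theorem tendstoLocallyUniformly_freeCongestedProfile (hγ : 0 < γ) (hμ : 0 < μ) (hvp : 1 < vp)
    {ε₀ : ℝ} (hε₀ : 0 < ε₀) {vb : ℝ → ℝ → ℝ}
    (hvb : ∀ ε ∈ Ioo 0 ε₀, IsNormalizedProfile γ μ vp ε (vb ε)) :
    TendstoLocallyUniformly vb (freeCongestedProfile vp (1 / √(vp - 1) / μ)) (𝓝[>] 0) := by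
  set s := 1 / √(vp - 1)
  have hs : 0 < s := one_div_pos.2 (sqrt_pos.2 (sub_pos.2 hvp))
  rw [tendstoLocallyUniformly_iff_forall_isCompact]
  intro K hK
  obtain ⟨R, hKR⟩ := hK.isBounded.subset_closedBall 0
  rw [Metric.tendstoUniformlyOn_iff]
  intro δ hδ
  have hbound : Tendsto
      (fun ε => (ε ^ (1 / (γ + 1)) + defect γ μ vp s ε * R) * exp (s / μ * vp * R)) (𝓝[>] 0)
      (𝓝 ((0 + 0 * R) * exp (s / μ * vp * R))) :=
    ((tendsto_rpow_nhdsGT_zero (by positivity)).add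
      ((tendsto_defect hγ hvp).mul_const R)).mul_const _
  rw [zero_mul, add_zero, zero_mul] at hbound
  filter_upwards [Ioo_mem_nhdsGT hε₀, (tendsto_speed hγ hvp).eventually_const_lt (half_lt_self hs),
    hbound.eventually_lt_const hδ] with ε hε hσ hlt x hx
  rw [dist_comm, Real.dist_eq]
  exact ((hvb ε hε).abs_sub_freeCongestedProfile_le hγ.le hμ hε.1 hs hσ
    (by simpa using hKR hx)).trans_lt hlt

end SoftCongestion

open SoftCongestion

theorem stmt10_general (γ μ vp : ℝ) (hγ : 1 ≤ γ) (hμ : 0 < μ) (hvp : 2 < vp)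
    (pe : ℝ → ℝ → ℝ) (hpe : ∀ ε v : ℝ, pe ε v = ε * (v - 1) ^ (-γ))
    (vm : ℝ → ℝ) (hvm : ∀ ε : ℝ, vm ε = 1 + ε ^ (1 / γ))
    (se : ℝ → ℝ) (hse : ∀ ε : ℝ, se ε = Real.sqrt ((pe ε (vm ε) - pe ε vp) / (vp - vm ε)))
    (Φ : ℝ → ℝ → ℝ) (hΦ : ∀ ε v : ℝ, Φ ε v = (se ε) ^ 2 * (vp - v) + pe ε vp - pe ε v)
    (ε₀ : ℝ) (hε₀ : 0 < ε₀)
    (vb : ℝ → ℝ → ℝ)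
    (hrange : ∀ ε ∈ Ioo (0 : ℝ) ε₀, ∀ x : ℝ, vb ε x ∈ Ioo (vm ε) vp)
    (hode : ∀ ε ∈ Ioo (0 : ℝ) ε₀, ∀ x : ℝ,
      HasDerivAt (vb ε) (vb ε x / (μ * se ε) * Φ ε (vb ε x)) x)
    (hmono : ∀ ε ∈ Ioo (0 : ℝ) ε₀, StrictMono (vb ε))
    (hnorm : ∀ ε ∈ Ioo (0 : ℝ) ε₀, vb ε 0 = 1 + ε ^ (1 / (γ + 1)))
    (s : ℝ) (hs : s = 1 / Real.sqrt (vp - 1))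
    (vlim : ℝ → ℝ)
    (hvlim : ∀ x : ℝ,
      vlim x = if x ≤ 0 then 1 else vp / (1 + (vp - 1) * Real.exp (-s * vp * x / μ))) :
    ∃ εn : ℕ → ℝ,
      (∀ n : ℕ, εn n ∈ Ioo (0 : ℝ) ε₀) ∧
      Tendsto εn atTop (nhds 0) ∧
      ∀ R > (0 : ℝ), ∀ δ > (0 : ℝ), ∃ N : ℕ, ∀ n ≥ N, ∀ x : ℝ, |x| ≤ R →
        |vb (εn n) x - vlim x| < δ := by
  obtain rfl : pe = pressure γ := funext₂ hpe
  obtain rfl : vm = leftState γ := funext hvm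
  obtain rfl : se = speed γ vp := funext hse
  obtain rfl : Φ = fun ε v => speed γ vp ε ^ 2 * (vp - v) + pressure γ ε vp - pressure γ ε v :=
    funext₂ hΦ
  obtain rfl : vlim = freeCongestedProfile vp (s / μ) := funext fun x => by
    rw [hvlim, freeCongestedProfile, logistic, show -s * vp * x / μ = -(s / μ) * vp * x by ring]
  subst hs
  have hloc := tendstoLocallyUniformly_freeCongestedProfile (by linarith) hμ (by linarith) hε₀
    fun ε hε => ⟨hrange ε hε, hode ε hε, (hmono ε hε).monotone, hnorm ε hε⟩
  obtain ⟨u, -, hu_mem, hu⟩ := exists_seq_strictAnti_tendsto' hε₀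
  have hu' : Tendsto u atTop (𝓝[>] 0) :=
    tendsto_nhdsWithin_iff.2 ⟨hu, .of_forall fun n => (hu_mem n).1⟩
  refine ⟨u, hu_mem, hu, fun R _ δ hδ => ?_⟩
  have hunif := Metric.tendstoUniformlyOn_iff.1
    (tendstoLocallyUniformly_iff_forall_isCompact.1 hloc _ (isCompact_Icc (a := -R) (b := R))) δ hδ
  obtain ⟨N, hN⟩ := eventually_atTop.1 (hu'.eventually hunif)
  exact ⟨N, fun n hn x hx => by
    simpa only [Real.dist_eq, abs_sub_comm] using hN n hn x (abs_le.1 hx)⟩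

/-- Along a sequence `ε_n → 0⁺`, the normalized soft-congestion profiles `v̄_{ε_n}` converge
to the limit free–congested profile `v̄` uniformly on every compact subset of `ℝ`. -/
theorem stmt10 (γ μ vp : ℝ) (hγ : 1 ≤ γ) (hμ : 0 < μ) (hvp : 2 < vp)
    (pe : ℝ → ℝ → ℝ) (hpe : ∀ ε v : ℝ, pe ε v = ε * (v - 1) ^ (-γ))
    (vm : ℝ → ℝ) (hvm : ∀ ε : ℝ, vm ε = 1 + ε ^ (1 / γ))
    (se : ℝ → ℝ) (hse : ∀ ε : ℝ, se ε = Real.sqrt ((pe ε (vm ε) - pe ε vp) / (vp - vm ε)))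
    (Φ : ℝ → ℝ → ℝ) (hΦ : ∀ ε v : ℝ, Φ ε v = (se ε) ^ 2 * (vp - v) + pe ε vp - pe ε v)
    (ε₀ : ℝ) (hε₀ : 0 < ε₀)
    (vb : ℝ → ℝ → ℝ)
    (hrange : ∀ ε ∈ Ioo (0 : ℝ) ε₀, ∀ x : ℝ, vb ε x ∈ Ioo (vm ε) vp)
    (hode : ∀ ε ∈ Ioo (0 : ℝ) ε₀, ∀ x : ℝ,
      HasDerivAt (vb ε) (vb ε x / (μ * se ε) * Φ ε (vb ε x)) x)
    (hmono : ∀ ε ∈ Ioo (0 : ℝ) ε₀, StrictMono (vb ε))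
    (hlim_bot : ∀ ε ∈ Ioo (0 : ℝ) ε₀, Tendsto (vb ε) atBot (nhds (vm ε)))
    (hlim_top : ∀ ε ∈ Ioo (0 : ℝ) ε₀, Tendsto (vb ε) atTop (nhds vp))
    (hnorm : ∀ ε ∈ Ioo (0 : ℝ) ε₀, vb ε 0 = 1 + ε ^ (1 / (γ + 1)))
    (s : ℝ) (hs : s = 1 / Real.sqrt (vp - 1))
    (vlim : ℝ → ℝ)
    (hvlim : ∀ x : ℝ,
      vlim x = if x ≤ 0 then 1 else vp / (1 + (vp - 1) * Real.exp (-s * vp * x / μ))) :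
    ∃ εn : ℕ → ℝ,
      (∀ n : ℕ, εn n ∈ Ioo (0 : ℝ) ε₀) ∧
      Tendsto εn atTop (nhds 0) ∧
      ∀ R > (0 : ℝ), ∀ δ > (0 : ℝ), ∃ N : ℕ, ∀ n ≥ N, ∀ x : ℝ, |x| ≤ R →
        |vb (εn n) x - vlim x| < δ :=
  stmt10_general γ μ vp hγ hμ hvp pe hpe vm hvm se hse Φ hΦ ε₀ hε₀ vb hrange hode hmono hnorm s hs
    vlim hvlim
end
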